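/- arXiv:2102.10734 — 2 statements merged into one kernel-verified Lean document; each statement's English description precedes it below -/
import Mathlib

section
/- Fix an integer r with 1 ≤ r < p, let λ_1 ≥ … ≥ λ_p > 0 be the decreasingly sorted eigenvalues of XᵀX, and set L = λ_1, μ = λ_p, κ = L/μ, κ_+ = L/λ_r, κ_- = λ_{r+1}/μ. Suppose the period T is an integer with T ≥ κ_+·log(2κ/(2κ_- − 1)) + 1 and the cyclical learning-rate schedule uses η_+ = 1/L and η_- = 1/(κ_-·μ). Then for every iteration index t ≥ 0 with t ≡ 0 (mod T), the gradient-descent iterates satisfy ‖θ_t − θ_⋆‖ ≤ (1 − 1/(2κ_-))^{t/T} · ‖θ_0 − θ_⋆‖. -/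
open scoped RealInnerProductSpace Matrix

set_option maxHeartbeats 1000000 in
/-- **Super-convergence of Unstable CLR for linear regression** (Theorem 1, convergence rate).
`X` is the design matrix with `XᵀX` positive definite, with eigenvalues `lam 0 ≥ … ≥ lam (p-1) > 0`
(witnessed by the orthonormal eigenbasis `b`).  With `κ = L/μ`, `κ₊ = L/λ_r`, `κ₋ = λ_{r+1}/μ`,
period `T ≥ κ₊·log(2κ/(2κ₋ − 1)) + 1`, and the cyclical learning-rate schedule taking the value
`η₋ = 1/(κ₋·μ)` when `t ≡ T−1 (mod T)` and `η₊ = 1/L` otherwise, the gradient-descent iterates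
satisfy `‖θ_t − θ⋆‖ ≤ (1 − 1/(2κ₋))^(t/T)·‖θ_0 − θ⋆‖` whenever `t ≡ 0 (mod T)`. -/
theorem unstable_clr_linear_regression
    {n p r : ℕ} (hr1 : 1 ≤ r) (hrp : r < p)
    (X : Matrix (Fin n) (Fin p) ℝ) (hpd : (Xᵀ * X).PosDef)
    (y : EuclideanSpace ℝ (Fin n))
    (b : OrthonormalBasis (Fin p) ℝ (EuclideanSpace ℝ (Fin p)))
    (lam : Fin p → ℝ) (hpos : ∀ i, 0 < lam i) (hsort : Antitone lam)
    (heig : ∀ i, Matrix.toEuclideanLin (Xᵀ * X) (b i) = lam i • b i)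
    (L μ κ κp κm ηp ηm : ℝ)
    (hL : L = lam ⟨0, by omega⟩) (hμ : μ = lam ⟨p - 1, by omega⟩)
    (hκ : κ = L / μ) (hκp : κp = L / lam ⟨r - 1, by omega⟩) (hκm : κm = lam ⟨r, hrp⟩ / μ)
    (hηp : ηp = 1 / L) (hηm : ηm = 1 / (κm * μ))
    (T : ℕ) (hT1 : 1 < T) (hT : (T : ℝ) ≥ κp * Real.log (2 * κ / (2 * κm - 1)) + 1)
    (η : ℕ → ℝ) (hη : ∀ t, η t = if t % T = T - 1 then ηm else ηp)
    (θstar : EuclideanSpace ℝ (Fin p))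
    (hmin : ∀ θ' : EuclideanSpace ℝ (Fin p),
      (1 / 2) * ‖y - Matrix.toEuclideanLin X θstar‖ ^ 2
        ≤ (1 / 2) * ‖y - Matrix.toEuclideanLin X θ'‖ ^ 2)
    (θ : ℕ → EuclideanSpace ℝ (Fin p))
    (hθ : ∀ t, θ (t + 1) = θ t + η t • Matrix.toEuclideanLin Xᵀ
      (y - Matrix.toEuclideanLin X (θ t)))
    (t : ℕ) (ht : t % T = 0) :
    ‖θ t - θstar‖ ≤ (1 - 1 / (2 * κm)) ^ (t / T) * ‖θ 0 - θstar‖ := by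
  -- Basic positivity and ordering facts
  have hμpos : 0 < μ := hμ ▸ hpos _
  have hLpos : 0 < L := hL ▸ hpos _
  have hlr : 0 < lam ⟨r, hrp⟩ := hpos _
  have hlr1 : 0 < lam ⟨r - 1, by omega⟩ := hpos _
  have hlamL : ∀ i, lam i ≤ L := by
    intro i; rw [hL]; exact hsort (by simp [Fin.le_def])
  have hlamμ : ∀ i, μ ≤ lam i := by
    intro i; rw [hμ]
    exact hsort (by simp only [Fin.le_def]; omega)
  have hκm1 : (1:ℝ) ≤ κm := by
    rw [hκm]; exact (one_le_div hμpos).mpr (hlamμ _)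
  have hκmpos : 0 < κm := lt_of_lt_of_le one_pos hκm1
  have hκp1 : (1:ℝ) ≤ κp := by
    rw [hκp]; exact (one_le_div hlr1).mpr (hlamL _)
  have hκppos : 0 < κp := lt_of_lt_of_le one_pos hκp1
  have hκκm : κm ≤ κ := by
    rw [hκm, hκ]; gcongr; exact hlamL _
  have hκpos : 0 < κ := lt_of_lt_of_le hκmpos hκκm
  have hηm' : ηm = 1 / lam ⟨r, hrp⟩ := by
    rw [hηm, hκm]; field_simp
  set q : ℝ := 1 - 1 / (2 * κm) with hqdef
  have hhalf : 1 / (2 * κm) ≤ 1 / κm :=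
    one_div_le_one_div_of_le hκmpos (by linarith)
  have hκminv : 1 / κm ≤ 1 :=
    (div_le_one hκmpos).mpr hκm1
  have hq0 : 0 ≤ q := by rw [hqdef]; linarith
  -- Key per-eigenvalue contraction bound over one period
  have hkey : ∀ i : Fin p, |1 - ηm * lam i| * |1 - ηp * lam i| ^ (T - 1) ≤ q := by
    intro i
    have hlpos := hpos i
    have hp1 : 0 ≤ 1 - ηp * lam i := by
      rw [hηp, one_div_mul_eq_div]
      have : lam i / L ≤ 1 := (div_le_one hLpos).mpr (hlamL i)
      linarith
    have hp2 : 1 - ηp * lam i ≤ 1 := by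
      rw [hηp, one_div_mul_eq_div]
      have : 0 ≤ lam i / L := by positivity
      linarith
    by_cases hcase : r ≤ i.val
    · -- small eigenvalues: both factors lie in [0,1]
      have hle : lam i ≤ lam ⟨r, hrp⟩ := by
        apply hsort; simp only [Fin.le_def]; omega
      have hm1 : 0 ≤ 1 - ηm * lam i := by
        rw [hηm', one_div_mul_eq_div]
        have : lam i / lam ⟨r, hrp⟩ ≤ 1 := (div_le_one hlr).mpr hle
        linarith
      have hinv : 1 / κm = μ / lam ⟨r, hrp⟩ := by rw [hκm, one_div_div]
      have hm2 : 1 / κm ≤ ηm * lam i := by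
        rw [hηm', one_div_mul_eq_div, hinv]
        gcongr
        exact hlamμ i
      have habs1 : |1 - ηm * lam i| ≤ 1 - 1 / κm := by
        rw [abs_of_nonneg hm1]; linarith
      have habs2 : |1 - ηp * lam i| ^ (T - 1) ≤ 1 := by
        apply pow_le_one₀ (abs_nonneg _)
        rw [abs_of_nonneg hp1]; linarith
      calc |1 - ηm * lam i| * |1 - ηp * lam i| ^ (T - 1)
          ≤ (1 - 1 / κm) * 1 := by
            apply mul_le_mul habs1 habs2 (by positivity) (by linarith)
        _ = 1 - 1 / κm := by ring
        _ ≤ q := by rw [hqdef]; linarith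
    · -- large eigenvalues: overshoot factor times strong decay
      push_neg at hcase
      have hge : lam ⟨r - 1, by omega⟩ ≤ lam i := by
        apply hsort; simp only [Fin.le_def]; omega
      have hLa : κ / κm = L / lam ⟨r, hrp⟩ := by
        rw [hκ, hκm]
        field_simp
      have hLa1 : 1 ≤ κ / κm := by
        rw [hLa]; exact (one_le_div hlr).mpr (hlamL _)
      have hub : ηm * lam i ≤ κ / κm := by
        rw [hηm', one_div_mul_eq_div, hLa]
        gcongr
        exact hlamL i
      have hlb : 0 ≤ ηm * lam i := by
        rw [hηm']; positivity
      have habs1 : |1 - ηm * lam i| ≤ κ / κm := by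
        rw [abs_le]; constructor <;> linarith
      -- decay of the (1 - ηp λ) factor
      have hinvp : 1 / κp = lam ⟨r - 1, by omega⟩ / L := by rw [hκp, one_div_div]
      have hp3 : 1 - ηp * lam i ≤ 1 - 1 / κp := by
        have : 1 / κp ≤ ηp * lam i := by
          rw [hηp, one_div_mul_eq_div, hinvp]
          gcongr
        linarith
      have hexp1 : 1 - 1 / κp ≤ Real.exp (-(1 / κp)) := by
        have := Real.add_one_le_exp (-(1 / κp)); linarith
      have hpow : |1 - ηp * lam i| ^ (T - 1) ≤ Real.exp (-(1 / κp)) ^ (T - 1) := by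
        apply pow_le_pow_left₀ (abs_nonneg _)
        rw [abs_of_nonneg hp1]; linarith
      have hzpos : 0 < 2 * κ / (2 * κm - 1) := by
        apply div_pos (by linarith) (by linarith)
      have hexp2 : Real.exp (-(1 / κp)) ^ (T - 1)
          = Real.exp (((T - 1 : ℕ) : ℝ) * (-(1 / κp))) := by
        rw [Real.exp_nat_mul]
      have hcast : ((T - 1 : ℕ) : ℝ) = (T : ℝ) - 1 := by
        rw [Nat.cast_sub (by omega)]; norm_num
      have hexp3 : Real.exp (((T - 1 : ℕ) : ℝ) * (-(1 / κp)))
          ≤ Real.exp (-(Real.log (2 * κ / (2 * κm - 1)))) := by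
        apply Real.exp_le_exp.mpr
        rw [hcast]
        have h1 : κp * Real.log (2 * κ / (2 * κm - 1)) ≤ (T : ℝ) - 1 := by linarith
        rw [mul_neg, neg_le_neg_iff, mul_one_div, le_div_iff₀ hκppos]
        linarith [h1]
      have hexp4 : Real.exp (-(Real.log (2 * κ / (2 * κm - 1))))
          = (2 * κm - 1) / (2 * κ) := by
        rw [Real.exp_neg, Real.exp_log hzpos, ← one_div, one_div_div]
      have hfact : κ / κm * ((2 * κm - 1) / (2 * κ)) = q := by
        rw [hqdef]; field_simp
      calc |1 - ηm * lam i| * |1 - ηp * lam i| ^ (T - 1)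
          ≤ (κ / κm) * ((2 * κm - 1) / (2 * κ)) := by
            apply mul_le_mul habs1 ?_ (by positivity) (by positivity)
            calc |1 - ηp * lam i| ^ (T - 1)
                ≤ Real.exp (-(1 / κp)) ^ (T - 1) := hpow
              _ = _ := hexp2
              _ ≤ _ := hexp3
              _ = _ := hexp4
        _ = q := hfact
  -- The gradient vanishes at the minimizer
  have hadjXT : ∀ (u : EuclideanSpace ℝ (Fin n)) (v : EuclideanSpace ℝ (Fin p)),
      ⟪Matrix.toEuclideanLin Xᵀ u, v⟫ = ⟪u, Matrix.toEuclideanLin X v⟫ := by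
    intro u v
    rw [show Xᵀ = Xᴴ from (Matrix.conjTranspose_eq_transpose_of_trivial X).symm,
      Matrix.toEuclideanLin_conjTranspose_eq_adjoint, LinearMap.adjoint_inner_left]
  have hquad : ∀ (c K : ℝ), 0 ≤ K → (∀ s : ℝ, 2 * s * c ≤ s ^ 2 * K) → c = 0 := by
    intro c K hK hkey2
    have hd : discrim K (-(2 * c)) 0 ≤ 0 := by
      apply discrim_le_zero
      intro x
      have := hkey2 x
      nlinarith [this]
    unfold discrim at hd
    ring_nf at hd
    have hc2 : c ^ 2 ≤ 0 := by linarith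
    have h0 : c ^ 2 = 0 := le_antisymm hc2 (sq_nonneg c)
    exact sq_eq_zero_iff.mp h0
  have hgrad : Matrix.toEuclideanLin Xᵀ (y - Matrix.toEuclideanLin X θstar) = 0 := by
    have hzero : ∀ v : EuclideanSpace ℝ (Fin p),
        ⟪y - Matrix.toEuclideanLin X θstar, Matrix.toEuclideanLin X v⟫ = 0 := by
      intro v
      apply hquad _ (‖Matrix.toEuclideanLin X v‖ ^ 2) (by positivity)
      intro s
      have h := hmin (θstar + s • v)
      have h2 : y - Matrix.toEuclideanLin X (θstar + s • v)
          = (y - Matrix.toEuclideanLin X θstar) - s • Matrix.toEuclideanLin X v := by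
        rw [map_add, map_smul]; abel
      have h4 : ‖(y - Matrix.toEuclideanLin X θstar) - s • Matrix.toEuclideanLin X v‖ ^ 2
          = ‖y - Matrix.toEuclideanLin X θstar‖ ^ 2
            - 2 * (s * ⟪y - Matrix.toEuclideanLin X θstar, Matrix.toEuclideanLin X v⟫)
            + s ^ 2 * ‖Matrix.toEuclideanLin X v‖ ^ 2 := by
        rw [norm_sub_sq_real, real_inner_smul_right, norm_smul, mul_pow,
          Real.norm_eq_abs, sq_abs]
      rw [h2, h4] at h
      linarith
    have := hzero (Matrix.toEuclideanLin Xᵀ (y - Matrix.toEuclideanLin X θstar))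
    rw [← hadjXT] at this
    exact inner_self_eq_zero.mp this
  -- Error recursion
  have hmul : ∀ v : EuclideanSpace ℝ (Fin p),
      Matrix.toEuclideanLin Xᵀ (Matrix.toEuclideanLin X v)
        = Matrix.toEuclideanLin (Xᵀ * X) v := by
    intro v
    simp [Matrix.toEuclideanLin_apply, Matrix.mulVec_mulVec]
  have herec : ∀ s, θ (s + 1) - θstar
      = (θ s - θstar) - η s • Matrix.toEuclideanLin (Xᵀ * X) (θ s - θstar) := by
    intro s
    have h1 : y - Matrix.toEuclideanLin X (θ s)
        = (y - Matrix.toEuclideanLin X θstar) - Matrix.toEuclideanLin X (θ s - θstar) := by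
      rw [map_sub]; abel
    rw [hθ s, h1, map_sub, hgrad, hmul, zero_sub, smul_neg]
    abel
  -- Coordinates in the eigenbasis
  have hAb : ∀ (i : Fin p) (v : EuclideanSpace ℝ (Fin p)),
      ⟪b i, Matrix.toEuclideanLin (Xᵀ * X) v⟫ = lam i * ⟪b i, v⟫ := by
    intro i v
    have hH : (Xᵀ * X)ᴴ = Xᵀ * X := by
      rw [Matrix.conjTranspose_eq_transpose_of_trivial, Matrix.transpose_mul,
        Matrix.transpose_transpose]
    have hadj : Matrix.toEuclideanLin (Xᵀ * X)
        = LinearMap.adjoint (Matrix.toEuclideanLin (Xᵀ * X)) := by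
      conv_lhs => rw [← hH]
      exact Matrix.toEuclideanLin_conjTranspose_eq_adjoint _
    calc ⟪b i, Matrix.toEuclideanLin (Xᵀ * X) v⟫
        = ⟪LinearMap.adjoint (Matrix.toEuclideanLin (Xᵀ * X)) (b i), v⟫ :=
          (LinearMap.adjoint_inner_left _ _ _).symm
      _ = ⟪Matrix.toEuclideanLin (Xᵀ * X) (b i), v⟫ := by rw [← hadj]
      _ = ⟪lam i • b i, v⟫ := by rw [heig]
      _ = lam i * ⟪b i, v⟫ := real_inner_smul_left _ _ _
  set c : Fin p → ℕ → ℝ := fun i s => ⟪b i, θ s - θstar⟫ with hcdef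
  have hcrec : ∀ (i : Fin p) (s : ℕ), c i (s + 1) = (1 - η s * lam i) * c i s := by
    intro i s
    show ⟪b i, θ (s + 1) - θstar⟫ = _
    rw [herec s, inner_sub_right, real_inner_smul_right, hAb]
    show _ = (1 - η s * lam i) * ⟪b i, θ s - θstar⟫
    ring
  -- Modular arithmetic helper
  have hmod : ∀ m j : ℕ, m % T = 0 → j < T → (m + j) % T = j := by
    intro m j hm hj
    simp [Nat.add_mod, hm, Nat.mod_eq_of_lt hj]
  -- One-block contraction
  have hblock : ∀ (i : Fin p) (m : ℕ), m % T = 0 → |c i (m + T)| ≤ q * |c i m| := by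
    intro i m hm
    have hpowc : ∀ j, j ≤ T - 1 → c i (m + j) = (1 - ηp * lam i) ^ j * c i m := by
      intro j
      induction j with
      | zero => intro _; simp
      | succ k ih =>
        intro hk
        have hη2 : η (m + k) = ηp := by
          rw [hη, if_neg]
          rw [hmod m k hm (by omega)]
          omega
        rw [show m + (k + 1) = (m + k) + 1 from rfl, hcrec i (m + k), hη2,
          ih (by omega)]
        ring
    have hη3 : η (m + (T - 1)) = ηm := by
      rw [hη, if_pos]
      rw [hmod m (T - 1) hm (by omega)]
    have hlast : c i (m + T) = (1 - ηm * lam i) * ((1 - ηp * lam i) ^ (T - 1) * c i m) := by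
      rw [show m + T = (m + (T - 1)) + 1 by omega, hcrec i (m + (T - 1)), hη3,
        hpowc (T - 1) le_rfl]
    rw [hlast, abs_mul, abs_mul, abs_pow, ← mul_assoc]
    exact mul_le_mul_of_nonneg_right (hkey i) (abs_nonneg _)
  -- Iterate: geometric decay over blocks
  have hiter : ∀ (k : ℕ) (i : Fin p), |c i (k * T)| ≤ q ^ k * |c i 0| := by
    intro k
    induction k with
    | zero => intro i; simp
    | succ k ih =>
      intro i
      calc |c i ((k + 1) * T)| = |c i (k * T + T)| := by ring_nf
        _ ≤ q * |c i (k * T)| := hblock i (k * T) (Nat.mul_mod_left k T)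
        _ ≤ q * (q ^ k * |c i 0|) := mul_le_mul_of_nonneg_left (ih i) hq0
        _ = q ^ (k + 1) * |c i 0| := by ring
  -- Parseval identity
  have hnorm : ∀ s, ‖θ s - θstar‖ ^ 2 = ∑ i, (c i s) ^ 2 := by
    intro s
    rw [← b.repr.norm_map (θ s - θstar)]
    rw [EuclideanSpace.norm_eq, Real.sq_sqrt (by positivity)]
    congr 1
    ext i
    rw [b.repr_apply_apply, Real.norm_eq_abs, sq_abs]
  -- Assemble
  have hTpos : 0 < T := by omega
  obtain ⟨k, hk⟩ : ∃ k, t = k * T :=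
    ⟨t / T, (Nat.div_mul_cancel (Nat.dvd_of_mod_eq_zero ht)).symm⟩
  have hdivk : t / T = k := by rw [hk, Nat.mul_div_cancel _ hTpos]
  have hsq : ‖θ t - θstar‖ ^ 2 ≤ (q ^ k * ‖θ 0 - θstar‖) ^ 2 := by
    rw [hnorm t, mul_pow, ← pow_mul, hnorm 0, Finset.mul_sum]
    apply Finset.sum_le_sum
    intro i _
    have h1 : |c i t| ≤ q ^ k * |c i 0| := by rw [hk]; exact hiter k i
    have h2 := pow_le_pow_left₀ (abs_nonneg (c i t)) h1 2
    rw [mul_pow, sq_abs, sq_abs] at h2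
    calc (c i t) ^ 2 ≤ (q ^ k) ^ 2 * (c i 0) ^ 2 := h2
      _ = q ^ (k * 2) * (c i 0) ^ 2 := by rw [← pow_mul]
  have hfin : ‖θ t - θstar‖ ≤ q ^ k * ‖θ 0 - θstar‖ := by
    have h1 := Real.sqrt_le_sqrt hsq
    rwa [Real.sqrt_sq (norm_nonneg _), Real.sqrt_sq (by positivity)] at h1
  rw [hdivk]
  exact hfin
end

section
/- Let f : ℝᵖ → ℝ satisfy the bimodal Hessian condition with constants L, μ, κ_+, κ_-, ε and subspace S, and let θ_⋆ be its minimizer. Suppose the period T is an integer with T ≥ 2κ_+·log(2L/(κ_-·μ)) + 1, the cyclical schedule uses η_- = 1/(κ_-·μ) and η_+ = 1/L, and 4ε ≤ min(1, κ_- /T)·μ. Define the gradient iterates θ_{t+1} = θ_t − η_t·∇f(θ_t) starting from θ_0, and set B = max(‖Π_S(θ_0 − θ_⋆)‖, ‖Π_{Sᶜ}(θ_0 − θ_⋆)‖). Then after one full period, max(‖Π_S(θ_T − θ_⋆)‖, ‖Π_{Sᶜ}(θ_T − θ_⋆)‖) ≤ (1 − 1/(4κ_-))·B. -/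
open scoped RealInnerProductSpace

/-- The orthogonal projection onto a subspace `S` of `ℝᵖ`, as a map `ℝᵖ → ℝᵖ`. -/
noncomputable def projE {p : ℕ} (S : Submodule ℝ (EuclideanSpace ℝ (Fin p)))
    (v : EuclideanSpace ℝ (Fin p)) : EuclideanSpace ℝ (Fin p) :=
  (S.orthogonalProjectionOnto v : EuclideanSpace ℝ (Fin p))

/-- The Hessian of `f : ℝᵖ → ℝ` at `x`, as the derivative of the gradient. -/
noncomputable def hessOp {p : ℕ} (f : EuclideanSpace ℝ (Fin p) → ℝ)
    (x : EuclideanSpace ℝ (Fin p)) :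
    EuclideanSpace ℝ (Fin p) →L[ℝ] EuclideanSpace ℝ (Fin p) :=
  fderiv ℝ (gradient f) x

/-- **Bimodal Hessian condition** (Definition 3): `f` is twice continuously
differentiable, `L`-smooth and `μ`-strongly convex, its Hessian restricted to the
subspace `S` has spectrum in `[L/κ₊, L]`, restricted to `Sᗮ` has spectrum in
`[μ, κ₋·μ]`, and the cross term `Π_S ∇²f(θ) Π_{Sᶜ}` has operator norm at most `ε`. -/
def BimodalHessian {p : ℕ} (f : EuclideanSpace ℝ (Fin p) → ℝ)
    (S : Submodule ℝ (EuclideanSpace ℝ (Fin p))) (L μ κp κm ε : ℝ) : Prop :=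
  0 < μ ∧ μ < L ∧ 1 ≤ κp ∧ 1 ≤ κm ∧ 0 ≤ ε ∧
  ContDiff ℝ 2 f ∧
  (∀ x v : EuclideanSpace ℝ (Fin p),
    μ * ‖v‖ ^ 2 ≤ ⟪v, hessOp f x v⟫ ∧ ⟪v, hessOp f x v⟫ ≤ L * ‖v‖ ^ 2) ∧
  (∀ x v : EuclideanSpace ℝ (Fin p),
    L / κp * ‖projE S v‖ ^ 2 ≤ ⟪projE S v, hessOp f x (projE S v)⟫ ∧
    ⟪projE S v, hessOp f x (projE S v)⟫ ≤ L * ‖projE S v‖ ^ 2) ∧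
  (∀ x v : EuclideanSpace ℝ (Fin p),
    μ * ‖projE Sᗮ v‖ ^ 2 ≤ ⟪projE Sᗮ v, hessOp f x (projE Sᗮ v)⟫ ∧
    ⟪projE Sᗮ v, hessOp f x (projE Sᗮ v)⟫ ≤ κm * μ * ‖projE Sᗮ v‖ ^ 2) ∧
  (∀ x v : EuclideanSpace ℝ (Fin p),
    ‖projE S (hessOp f x (projE Sᗮ v))‖ ≤ ε * ‖v‖)

/-!
Write `r_t = θ_t - θ⋆`. Since `∇f θ⋆ = 0`, a gradient step reads `r_{t+1} = (1 - η_t H_t) r_t`,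
where `H_t` is the Hessian averaged over the segment `[θ⋆, θ_t]`; it is self-adjoint and inherits
all bimodal bounds. Compressing `1 - η H` to `S` and to `Sᗮ` (a self-adjoint operator whose norm is
its numerical radius) yields coupled recursions for the two block norms, with coupling `η ε`.
During the `T - 1` steps of size `1/L` neither block norm exceeds `B`, and the `S`-block decays at
rate `1 - 1/κ₊`. The final step of size `1/(κ₋ μ)` contracts the `Sᗮ`-block by `1 - 1/κ₋` and
expands the `S`-block by at most `L/(κ₋ μ) - 1`, which the length of the warm-up compensates.
-/

section SymmetricOperator

variable {E : Type*} [NormedAddCommGroup E] [InnerProductSpace ℝ E]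

theorem abs_sub_mul_le_max_mul {n s a b η : ℝ} (hη : 0 ≤ η) (hn : 0 ≤ n)
    (ha : a * n ≤ s) (hb : s ≤ b * n) :
    |n - η * s| ≤ max (1 - η * a) (η * b - 1) * n := by
  have h₁ : η * (a * n) ≤ η * s := mul_le_mul_of_nonneg_left ha hη
  have h₂ : η * s ≤ η * (b * n) := mul_le_mul_of_nonneg_left hb hη
  have h₃ := mul_le_mul_of_nonneg_right (le_max_left (1 - η * a) (η * b - 1)) hn
  have h₄ := mul_le_mul_of_nonneg_right (le_max_right (1 - η * a) (η * b - 1)) hn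
  rw [abs_le]
  constructor <;> nlinarith

theorem ContinuousLinearMap.opNorm_le_of_abs_inner_le {T : E →L[ℝ] E}
    (hT : (T : E →ₗ[ℝ] E).IsSymmetric) {c : ℝ} (hc : 0 ≤ c)
    (h : ∀ x, |⟪T x, x⟫| ≤ c * ‖x‖ ^ 2) : ‖T‖ ≤ c := by
  rw [T.norm_eq_iSup_rayleighQuotient hT]
  refine ciSup_le fun x => ?_
  rcases eq_or_ne x 0 with rfl | hx
  · simpa using hc
  · rw [rayleighQuotient, reApplyInnerSelf_apply, abs_div, abs_sq]
    exact div_le_of_le_mul₀ (by positivity) hc (by simpa using h x)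

variable [CompleteSpace E] (K : Submodule ℝ E) [K.HasOrthogonalProjection]

theorem norm_starProjection_sub_smul_le {H : E →L[ℝ] E} (hH : IsSelfAdjoint H)
    {a b η : ℝ} (hη : 0 ≤ η) (hab : a ≤ b)
    (hK : ∀ w ∈ K, a * ‖w‖ ^ 2 ≤ ⟪w, H w⟫ ∧ ⟪w, H w⟫ ≤ b * ‖w‖ ^ 2) (r : E) :
    ‖K.starProjection (r - η • H r)‖ ≤
      max (1 - η * a) (η * b - 1) * ‖K.starProjection r‖
        + η * ‖K.starProjection (H (Kᗮ.starProjection r))‖ := by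
  set P := K.starProjection
  set c := max (1 - η * a) (η * b - 1)
  have hc : 0 ≤ c := by
    have := mul_le_mul_of_nonneg_left hab hη
    linarith [le_max_left (1 - η * a) (η * b - 1), le_max_right (1 - η * a) (η * b - 1)]
  have hPP (x : E) : P (P x) = P x := K.starProjection_eq_self_iff.2 (K.starProjection_apply_mem x)
  set T : E →L[ℝ] E := P ∘L (1 - η • H) ∘L P
  have hT : IsSelfAdjoint T :=
    ((IsSelfAdjoint.one (E →L[ℝ] E)).sub ((IsSelfAdjoint.all η).smul hH)).conj_starProjection K
  have hTx (x : E) : T x = P (P x - η • H (P x)) := by simp [T]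
  have hTnorm : ‖T‖ ≤ c := by
    refine T.opNorm_le_of_abs_inner_le hT.isSymmetric hc fun x => ?_
    obtain ⟨hlo, hhi⟩ := hK (P x) (K.starProjection_apply_mem x)
    have hform : ⟪T x, x⟫ = ‖P x‖ ^ 2 - η * ⟪P x, H (P x)⟫ := by
      rw [hTx, K.inner_starProjection_left_eq_right, inner_sub_left, real_inner_smul_left,
        real_inner_self_eq_norm_sq, real_inner_comm]
    calc |⟪T x, x⟫| ≤ c * ‖P x‖ ^ 2 := hform ▸ abs_sub_mul_le_max_mul hη (by positivity) hlo hhi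
      _ ≤ c * ‖x‖ ^ 2 := by gcongr; exact K.norm_starProjection_apply_le x
  have hsplit : P (r - η • H r) = T (P r) - η • P (H (Kᗮ.starProjection r)) := by
    have hQ : Kᗮ.starProjection r = r - P r := by simp [P, K.starProjection_orthogonal]
    simp only [hTx, hPP, hQ, map_sub, map_smul, smul_sub]
    abel
  calc ‖P (r - η • H r)‖ ≤ ‖T (P r)‖ + ‖η • P (H (Kᗮ.starProjection r))‖  :=
        hsplit ▸ norm_sub_le _ _
    _ ≤ c * ‖P r‖ + η * ‖P (H (Kᗮ.starProjection r))‖ := by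
        rw [norm_smul, Real.norm_of_nonneg hη]
        gcongr
        exact T.le_of_opNorm_le hTnorm _

theorem norm_starProjection_orthogonal_comp_le {H : E →L[ℝ] E} (hH : IsSelfAdjoint H)
    {ε : ℝ} (hε : 0 ≤ ε) (h : ∀ v, ‖K.starProjection (H (Kᗮ.starProjection v))‖ ≤ ε * ‖v‖)
    (v : E) : ‖Kᗮ.starProjection (H (K.starProjection v))‖ ≤ ε * ‖v‖ := by
  set A := K.starProjection ∘L H ∘L Kᗮ.starProjection
  have hA : ‖A‖ ≤ ε := A.opNorm_le_bound hε h
  have hadj : ContinuousLinearMap.adjoint A = Kᗮ.starProjection ∘L H ∘L K.starProjection := by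
    simp only [A, ContinuousLinearMap.adjoint_comp, (isSelfAdjoint_starProjection _).adjoint_eq,
      hH.adjoint_eq, ContinuousLinearMap.comp_assoc]
  calc ‖Kᗮ.starProjection (H (K.starProjection v))‖ = ‖ContinuousLinearMap.adjoint A v‖ := by
        rw [hadj]; rfl
    _ ≤ ε * ‖v‖ := (ContinuousLinearMap.adjoint A).le_of_opNorm_le (by simpa using hA) v

end SymmetricOperator

section Hessian

variable {p : ℕ} {f : EuclideanSpace ℝ (Fin p) → ℝ}

theorem contDiff_gradient (hf : ContDiff ℝ 2 f) : ContDiff ℝ 1 (gradient f) :=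
  (InnerProductSpace.toDual ℝ _).symm.contDiff.comp (hf.fderiv_right (by norm_num))

theorem inner_hessOp (x u v : EuclideanSpace ℝ (Fin p)) :
    ⟪hessOp f x u, v⟫ = fderiv ℝ (fderiv ℝ f) x u v := by
  rw [hessOp, show gradient f = (InnerProductSpace.toDual ℝ _).symm ∘ fderiv ℝ f from rfl,
    LinearIsometryEquiv.comp_fderiv]
  exact InnerProductSpace.toDual_symm_apply

theorem isSelfAdjoint_hessOp (hf : ContDiff ℝ 2 f) (x : EuclideanSpace ℝ (Fin p)) :
    IsSelfAdjoint (hessOp f x) := by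
  refine ContinuousLinearMap.isSelfAdjoint_iff_isSymmetric.2 fun u v => ?_
  have hsymm := hf.contDiffAt.isSymmSndFDerivAt (x := x) (by simp)
  simp only [ContinuousLinearMap.coe_coe]
  rw [inner_hessOp, real_inner_comm, inner_hessOp, hsymm.eq]

theorem continuous_hessOp (hf : ContDiff ℝ 2 f) : Continuous (hessOp f) :=
  (contDiff_gradient hf).continuous_fderiv one_ne_zero

theorem gradient_eq_zero_of_forall_le {x : EuclideanSpace ℝ (Fin p)} (hx : ∀ y, f x ≤ f y) :
    gradient f x = 0 := by
  have hmin : IsLocalMin f x := Filter.Eventually.of_forall hx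
  rw [gradient, hmin.fderiv_eq_zero, map_zero]

noncomputable def avgHess (f : EuclideanSpace ℝ (Fin p) → ℝ) (x r : EuclideanSpace ℝ (Fin p)) :
    EuclideanSpace ℝ (Fin p) →L[ℝ] EuclideanSpace ℝ (Fin p) :=
  ∫ s in (0 : ℝ)..1, hessOp f (x + s • r)

variable (hf : ContDiff ℝ 2 f) (x r : EuclideanSpace ℝ (Fin p))
include hf

theorem continuous_hessOp_segment : Continuous fun s : ℝ => hessOp f (x + s • r) := by
  have := continuous_hessOp hf
  fun_prop

theorem map_avgHess {F : Type*} [NormedAddCommGroup F] [NormedSpace ℝ F]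
    [CompleteSpace F]
    (φ : (EuclideanSpace ℝ (Fin p) →L[ℝ] EuclideanSpace ℝ (Fin p)) →L[ℝ] F) :
    φ (avgHess f x r) = ∫ s in (0 : ℝ)..1, φ (hessOp f (x + s • r)) :=
  (φ.intervalIntegral_comp_comm ((continuous_hessOp_segment hf x r).intervalIntegrable 0 1)).symm

theorem inner_avgHess (u w : EuclideanSpace ℝ (Fin p)) :
    ⟪u, avgHess f x r w⟫ = ∫ s in (0 : ℝ)..1, ⟪u, hessOp f (x + s • r) w⟫ :=
  map_avgHess hf x r ((innerSL ℝ u).comp (ContinuousLinearMap.apply ℝ _ w))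

theorem avgHess_apply_self : avgHess f x r r = gradient f (x + r) - gradient f x := by
  have hderiv (s : ℝ) : HasDerivAt (fun s : ℝ => gradient f (x + s • r))
      (hessOp f (x + s • r) r) s :=
    (((contDiff_gradient hf).differentiable one_ne_zero _).hasFDerivAt).comp_hasDerivAt s
      (((hasDerivAt_id s).smul_const r).const_add x |>.congr_deriv (one_smul ℝ r))
  have := intervalIntegral.integral_eq_sub_of_hasDerivAt (fun s _ => hderiv s)
    ((ContinuousLinearMap.apply ℝ _ r).continuous.comp
      (continuous_hessOp_segment hf x r) |>.intervalIntegrable 0 1)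
  rw [show avgHess f x r r = _ from map_avgHess hf x r (ContinuousLinearMap.apply ℝ _ r)]
  simpa using this

theorem isSelfAdjoint_avgHess : IsSelfAdjoint (avgHess f x r) := by
  refine ContinuousLinearMap.isSelfAdjoint_iff_isSymmetric.2 fun u w => ?_
  simp only [ContinuousLinearMap.coe_coe]
  rw [real_inner_comm, inner_avgHess hf, inner_avgHess hf]
  congr 1
  funext s
  rw [real_inner_comm]
  exact (isSelfAdjoint_hessOp hf _).isSymmetric u w

theorem continuous_inner_hessOp_segment (u w : EuclideanSpace ℝ (Fin p)) :
    Continuous fun s : ℝ => ⟪u, hessOp f (x + s • r) w⟫ :=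
  continuous_const.inner
    ((ContinuousLinearMap.apply ℝ _ w).continuous.comp (continuous_hessOp_segment hf x r))

theorem le_inner_avgHess {c : ℝ} {w : EuclideanSpace ℝ (Fin p)}
    (h : ∀ y, c ≤ ⟪w, hessOp f y w⟫) : c ≤ ⟪w, avgHess f x r w⟫ := by
  rw [inner_avgHess hf]
  simpa using intervalIntegral.integral_mono_on (μ := MeasureTheory.volume) zero_le_one
    (continuous_const.intervalIntegrable 0 1)
    ((continuous_inner_hessOp_segment hf x r w w).intervalIntegrable 0 1)
    fun s _ => h (x + s • r)

theorem inner_avgHess_le {c : ℝ} {w : EuclideanSpace ℝ (Fin p)}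
    (h : ∀ y, ⟪w, hessOp f y w⟫ ≤ c) : ⟪w, avgHess f x r w⟫ ≤ c := by
  rw [inner_avgHess hf]
  simpa using intervalIntegral.integral_mono_on (μ := MeasureTheory.volume) zero_le_one
    ((continuous_inner_hessOp_segment hf x r w w).intervalIntegrable 0 1)
    (continuous_const.intervalIntegrable 0 1) fun s _ => h (x + s • r)

theorem norm_map_avgHess_le {F : Type*} [NormedAddCommGroup F] [NormedSpace ℝ F]
    [CompleteSpace F] (φ : (EuclideanSpace ℝ (Fin p) →L[ℝ] EuclideanSpace ℝ (Fin p)) →L[ℝ] F)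
    {C : ℝ} (h : ∀ y, ‖φ (hessOp f y)‖ ≤ C) : ‖φ (avgHess f x r)‖ ≤ C := by
  rw [map_avgHess hf]
  simpa using intervalIntegral.norm_integral_le_of_norm_le_const (a := 0) (b := 1)
    fun s _ => h (x + s • r)

end Hessian

theorem projE_eq_starProjection {p : ℕ} (S : Submodule ℝ (EuclideanSpace ℝ (Fin p))) :
    projE S = S.starProjection :=
  rfl

section GradientStep

variable {p : ℕ} {f : EuclideanSpace ℝ (Fin p) → ℝ} {S : Submodule ℝ (EuclideanSpace ℝ (Fin p))}
  {L μ κp κm ε : ℝ} {θs : EuclideanSpace ℝ (Fin p)}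

theorem sub_smul_gradient_sub_eq (hf : ContDiff ℝ 2 f) (hθs : gradient f θs = 0)
    (θ : EuclideanSpace ℝ (Fin p)) (η : ℝ) :
    θ - η • gradient f θ - θs = (θ - θs) - η • avgHess f θs (θ - θs) (θ - θs) := by
  rw [avgHess_apply_self hf, add_sub_cancel, hθs, sub_zero]
  abel

theorem BimodalHessian.norm_cross_avgHess_le (hbim : BimodalHessian f S L μ κp κm ε)
    (x r v : EuclideanSpace ℝ (Fin p)) :
    ‖S.starProjection (avgHess f x r (Sᗮ.starProjection v))‖ ≤ ε * ‖v‖ := by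
  obtain ⟨-, -, -, -, -, hf, -, -, -, hcross⟩ := hbim
  exact norm_map_avgHess_le hf x r
    (S.starProjection ∘L ContinuousLinearMap.apply ℝ _ (Sᗮ.starProjection v)) (hcross · v)

theorem BimodalHessian.norm_starProjection_step_le (hbim : BimodalHessian f S L μ κp κm ε)
    (hθs : gradient f θs = 0) {η : ℝ} (hη : 0 ≤ η) (θ : EuclideanSpace ℝ (Fin p)) :
    ‖S.starProjection (θ - η • gradient f θ - θs)‖ ≤
      max (1 - η * max (L / κp) μ) (η * L - 1) * ‖S.starProjection (θ - θs)‖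
        + η * ε * ‖Sᗮ.starProjection (θ - θs)‖ := by
  have hcross := hbim.norm_cross_avgHess_le θs (θ - θs) (Sᗮ.starProjection (θ - θs))
  obtain ⟨hμ, hμL, hκp, -, -, hf, hglob, hS, -⟩ := hbim
  have hself (w) (hw : w ∈ S) : projE S w = w := S.starProjection_eq_self_iff.2 hw
  have hbounds (w) (hw : w ∈ S) : max (L / κp) μ * ‖w‖ ^ 2 ≤ ⟪w, avgHess f θs (θ - θs) w⟫ ∧
      ⟪w, avgHess f θs (θ - θs) w⟫ ≤ L * ‖w‖ ^ 2 := by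
    refine ⟨le_inner_avgHess hf _ _ fun y => ?_, inner_avgHess_le hf _ _ fun y => ?_⟩
    · rw [max_mul_of_nonneg _ _ (sq_nonneg _)]
      exact max_le (hself w hw ▸ (hS y w).1) (hglob y w).1
    · exact hself w hw ▸ (hS y w).2
  rw [Sᗮ.starProjection_eq_self_iff.2 (Sᗮ.starProjection_apply_mem _)] at hcross
  rw [sub_smul_gradient_sub_eq hf hθs, mul_assoc]
  grw [norm_starProjection_sub_smul_le S (isSelfAdjoint_avgHess hf _ _) hη
    (max_le (div_le_self (by linarith) hκp) hμL.le) hbounds, hcross]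

theorem BimodalHessian.norm_starProjection_orthogonal_step_le
    (hbim : BimodalHessian f S L μ κp κm ε) (hθs : gradient f θs = 0) {η : ℝ} (hη : 0 ≤ η)
    (hηc : η * min L (κm * μ) ≤ 1) (θ : EuclideanSpace ℝ (Fin p)) :
    ‖Sᗮ.starProjection (θ - η • gradient f θ - θs)‖ ≤
      (1 - η * μ) * ‖Sᗮ.starProjection (θ - θs)‖ + η * ε * ‖S.starProjection (θ - θs)‖ := by
  have hcross := hbim.norm_cross_avgHess_le θs (θ - θs)
  obtain ⟨hμ, hμL, -, hκm, hε, hf, hglob, -, hSperp, -⟩ := hbim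
  have hself (w) (hw : w ∈ Sᗮ) : projE Sᗮ w = w := Sᗮ.starProjection_eq_self_iff.2 hw
  have hbounds (w) (hw : w ∈ Sᗮ) : μ * ‖w‖ ^ 2 ≤ ⟪w, avgHess f θs (θ - θs) w⟫ ∧
      ⟪w, avgHess f θs (θ - θs) w⟫ ≤ min L (κm * μ) * ‖w‖ ^ 2 := by
    refine ⟨le_inner_avgHess hf _ _ fun y => (hglob y w).1, inner_avgHess_le hf _ _ fun y => ?_⟩
    rw [min_mul_of_nonneg _ _ (sq_nonneg _)]
    exact le_min (hglob y w).2 (hself w hw ▸ (hSperp y w).2)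
  have hμc : μ ≤ min L (κm * μ) := le_min hμL.le (le_mul_of_one_le_left hμ.le hκm)
  have hfactor : max (1 - η * μ) (η * min L (κm * μ) - 1) = 1 - η * μ :=
    max_eq_left (by nlinarith)
  have hcross' := norm_starProjection_orthogonal_comp_le S (isSelfAdjoint_avgHess hf _ _) hε
    hcross (S.starProjection (θ - θs))
  rw [S.starProjection_eq_self_iff.2 (S.starProjection_apply_mem _)] at hcross'
  have hstep := norm_starProjection_sub_smul_le Sᗮ (isSelfAdjoint_avgHess hf θs (θ - θs)) hη hμc
    hbounds (θ - θs)
  simp only [hfactor, S.orthogonal_orthogonal] at hstep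
  rw [sub_smul_gradient_sub_eq hf hθs, mul_assoc]
  grw [hstep, hcross']

theorem BimodalHessian.gradient_step_le (hbim : BimodalHessian f S L μ κp κm ε)
    (hθs : gradient f θs = 0) {η : ℝ} (hη : 0 ≤ η) (hηc : η * min L (κm * μ) ≤ 1)
    {θ θ' : EuclideanSpace ℝ (Fin p)} (hθ' : θ' = θ - η • gradient f θ) :
    ‖S.starProjection (θ' - θs)‖ ≤
        max (1 - η * max (L / κp) μ) (η * L - 1) * ‖S.starProjection (θ - θs)‖
          + η * ε * ‖Sᗮ.starProjection (θ - θs)‖ ∧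
      ‖Sᗮ.starProjection (θ' - θs)‖ ≤
        (1 - η * μ) * ‖Sᗮ.starProjection (θ - θs)‖ + η * ε * ‖S.starProjection (θ - θs)‖ :=
  hθ' ▸ ⟨hbim.norm_starProjection_step_le hθs hη θ,
    hbim.norm_starProjection_orthogonal_step_le hθs hη hηc θ⟩

end GradientStep

section Recursion

theorem le_and_le_of_coupled_le {a b : ℕ → ℝ} {α β δ B : ℝ} {n : ℕ} (hα : 0 ≤ α)
    (hβ : 0 ≤ β) (hδ : 0 ≤ δ) (hαδ : α + δ ≤ 1) (hβδ : β + δ ≤ 1) (hB : 0 ≤ B)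
    (ha0 : a 0 ≤ B) (hb0 : b 0 ≤ B) (ha : ∀ t < n, a (t + 1) ≤ α * a t + δ * b t)
    (hb : ∀ t < n, b (t + 1) ≤ β * b t + δ * a t) : ∀ t ≤ n, a t ≤ B ∧ b t ≤ B := by
  intro t ht
  induction t with
  | zero => exact ⟨ha0, hb0⟩
  | succ t ih =>
    obtain ⟨hat, hbt⟩ := ih (by omega)
    have := mul_le_mul_of_nonneg_left hat hα
    have := mul_le_mul_of_nonneg_left hbt hβ
    have := mul_le_mul_of_nonneg_left hat hδ
    have := mul_le_mul_of_nonneg_left hbt hδ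
    exact ⟨(ha t ht).trans (by nlinarith), (hb t ht).trans (by nlinarith)⟩

theorem le_pow_mul_add_div_of_le_mul_add {u : ℕ → ℝ} {q c B : ℝ} {n : ℕ} (hq0 : 0 ≤ q)
    (hq1 : q < 1) (hc : 0 ≤ c) (hu0 : u 0 ≤ B) (hu : ∀ t < n, u (t + 1) ≤ q * u t + c) :
    ∀ t ≤ n, u t ≤ q ^ t * B + c / (1 - q) := by
  intro t ht
  induction t with
  | zero =>
    have : 0 ≤ c / (1 - q) := div_nonneg hc (by linarith)
    simpa using hu0.trans (le_add_of_nonneg_right this)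
  | succ t ih =>
    calc u (t + 1) ≤ q * u t + c := hu t ht
      _ ≤ q * (q ^ t * B + c / (1 - q)) + c := by gcongr; exact ih (by omega)
      _ = q ^ (t + 1) * B + c / (1 - q) := by field_simp [(by linarith : 1 - q ≠ 0)]; ring

theorem one_sub_inv_pow_le_exp {κ : ℝ} (hκ : 1 ≤ κ) (n : ℕ) :
    (1 - 1 / κ) ^ n ≤ Real.exp (-(n / κ)) := by
  have h0 : 0 ≤ 1 - 1 / κ := sub_nonneg.2 (div_le_one_of_le₀ hκ (by linarith))
  calc (1 - 1 / κ) ^ n ≤ Real.exp (-(1 / κ)) ^ n :=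
        pow_le_pow_left₀ h0 (Real.one_sub_le_exp_neg _) n
    _ = Real.exp (-(n / κ)) := by rw [← Real.exp_nat_mul]; ring_nf

theorem sub_one_mul_pow_le_quarter {x κ : ℝ} {n : ℕ} (hx : 1 ≤ x) (hκ : 1 ≤ κ)
    (hn : 2 * κ * Real.log (2 * x) ≤ n) : (x - 1) * (1 - 1 / κ) ^ n ≤ 1 / 4 := by
  have hexp : (1 - 1 / κ) ^ n ≤ 1 / (2 * x) ^ 2 := by
    calc (1 - 1 / κ) ^ n ≤ Real.exp (-(n / κ)) := one_sub_inv_pow_le_exp hκ n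
      _ ≤ Real.exp (-(2 * Real.log (2 * x))) := by
        gcongr
        rw [le_div_iff₀ (by linarith)]
        linarith
      _ = 1 / (2 * x) ^ 2 := by
        rw [← Real.exp_log (by positivity : (0 : ℝ) < (2 * x) ^ 2), Real.log_pow, one_div,
          ← Real.exp_neg]
        norm_num
  calc (x - 1) * (1 - 1 / κ) ^ n ≤ (x - 1) * (1 / (2 * x) ^ 2) := by gcongr
    _ ≤ 1 / 4 := by
      rw [mul_one_div, div_le_div_iff₀ (by positivity) (by norm_num)]
      nlinarith

end Recursion

section CyclicalSchedule

variable {L μ κp κm ε : ℝ} {a b : ℕ → ℝ}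

theorem clr_warmup_le (hμ : 0 < μ) (hμL : μ < L) (hκp : 1 ≤ κp) (hε : 0 ≤ ε) (hεμ : ε ≤ μ)
    (ha : ∀ t, 0 ≤ a t) {n : ℕ}
    (hstep : ∀ t < n,
      a (t + 1) ≤ max (1 - 1 / L * max (L / κp) μ) (1 / L * L - 1) * a t + 1 / L * ε * b t ∧
      b (t + 1) ≤ (1 - 1 / L * μ) * b t + 1 / L * ε * a t) :
    a n ≤ max (a 0) (b 0) ∧ b n ≤ max (a 0) (b 0) ∧
      a n ≤ (1 - 1 / κp) ^ n * max (a 0) (b 0) + κp * ε / L * max (a 0) (b 0) := by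
  set B := max (a 0) (b 0)
  set aS := max (L / κp) μ
  have hL : 0 < L := hμ.trans hμL
  have hκp0 : 0 < κp := by linarith
  have haS : aS ≤ L := max_le (div_le_self hL.le hκp) hμL.le
  have hα : 0 ≤ 1 - aS / L := sub_nonneg.2 ((div_le_one hL).2 haS)
  simp only [one_div_mul_eq_div, div_self hL.ne', sub_self, max_eq_left hα] at hstep
  have hB : 0 ≤ B := (ha 0).trans (le_max_left _ _)
  have hεaS : ε ≤ aS := hεμ.trans (le_max_right _ _)
  have hbounded := le_and_le_of_coupled_le hα (sub_nonneg.2 ((div_le_one hL).2 hμL.le))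
    (div_nonneg hε hL.le)
    (by rw [sub_add, sub_le_self_iff, ← sub_div]; exact div_nonneg (by linarith) hL.le)
    (by rw [sub_add, sub_le_self_iff, ← sub_div]; exact div_nonneg (by linarith) hL.le) hB
    (le_max_left _ _) (le_max_right _ _) (fun t ht => (hstep t ht).1) fun t ht => (hstep t ht).2
  have hq : 1 / κp ≤ aS / L := by
    rw [div_le_div_iff₀ hκp0 hL, one_mul]
    exact (div_le_iff₀ hκp0).1 (le_max_left _ _)
  have hgeo := le_pow_mul_add_div_of_le_mul_add (u := a) (n := n) (c := ε / L * B) (B := B)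
    (sub_nonneg.2 (div_le_one_of_le₀ hκp hκp0.le)) (by simp [hκp0]) (by positivity)
    (le_max_left _ _) fun t ht => by
      obtain ⟨-, hbt⟩ := hbounded t ht.le
      calc a (t + 1) ≤ (1 - aS / L) * a t + ε / L * b t := (hstep t ht).1
        _ ≤ (1 - 1 / κp) * a t + ε / L * B := by gcongr; exact ha t
  refine ⟨(hbounded n le_rfl).1, (hbounded n le_rfl).2, (hgeo n le_rfl).trans_eq ?_⟩
  field_simp
  ring

theorem le_of_last_step_contraction (hμ : 0 < μ) (hκm : 1 ≤ κm) (hε : 0 ≤ ε) (hεμ : 4 * ε ≤ μ)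
    {u v B w : ℝ} (hu : 0 ≤ u) (huB : u ≤ B) (hvB : v ≤ B)
    (hw : w ≤ (1 - 1 / κm) * u + ε / (κm * μ) * v) : w ≤ (1 - 1 / (4 * κm)) * B := by
  have hκm0 : 0 < κm := by linarith
  have hηε : ε / (κm * μ) ≤ 1 / (4 * κm) := by
    rw [div_le_div_iff₀ (by positivity) (by positivity)]; nlinarith
  calc w ≤ (1 - 1 / κm) * B + 1 / (4 * κm) * B := by
        have : 0 ≤ 1 - 1 / κm := sub_nonneg.2 (div_le_one_of_le₀ hκm hκm0.le)
        have : 0 ≤ B := hu.trans huB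
        grw [hw, huB, hvB, hηε]
    _ ≤ (1 - 1 / (4 * κm)) * B := by
        rw [← add_mul]; gcongr
        · exact hu.trans huB
        · field_simp; linarith

theorem clr_last_step_S_le (hμ : 0 < μ) (hμL : μ < L) (hκp : 1 ≤ κp) (hκm : 1 ≤ κm)
    (hε : 0 ≤ ε) {T : ℕ} (hT1 : 1 < T) (hT : (T : ℝ) ≥ 2 * κp * Real.log (2 * L / (κm * μ)) + 1)
    (hεμ : 4 * ε ≤ μ) (hεT : 4 * ε * T ≤ κm * μ) {a' b' B aT : ℝ} (ha' : 0 ≤ a')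
    (ha'B : a' ≤ B) (hb'B : b' ≤ B)
    (hgeo : a' ≤ (1 - 1 / κp) ^ (T - 1) * B + κp * ε / L * B)
    (haT : aT ≤ max (1 - 1 / (κm * μ) * max (L / κp) μ) (1 / (κm * μ) * L - 1) * a'
      + 1 / (κm * μ) * ε * b') :
    aT ≤ (1 - 1 / (4 * κm)) * B := by
  have hB : 0 ≤ B := ha'.trans ha'B
  have hκm0 : 0 < κm := by linarith
  have hκmμ : 0 < κm * μ := by positivity
  set x := L / (κm * μ)
  rw [one_div_mul_eq_div, one_div_mul_eq_div, one_div_mul_eq_div] at haT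
  have hκm1 : 0 ≤ 1 - 1 / κm := sub_nonneg.2 (div_le_one_of_le₀ hκm hκm0.le)
  have hfactor : 1 - max (L / κp) μ / (κm * μ) ≤ 1 - 1 / κm := by
    refine sub_le_sub_left ?_ 1
    calc 1 / κm = μ / (κm * μ) := by field_simp
      _ ≤ max (L / κp) μ / (κm * μ) := by gcongr; exact le_max_right _ _
  -- Either the long step contracts `S` as well, or the expansion factor `x - 1` is absorbed
  -- by the decay `(1 - 1/κp)^(T-1) ≤ 1/(2x)²` accumulated during the warm-up.
  rcases le_or_gt (x - 1) (1 - 1 / κm) with hx | hx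
  · exact le_of_last_step_contraction hμ hκm hε hεμ ha' ha'B hb'B
      (by grw [haT, max_le hfactor hx])
  · have hx1 : 1 ≤ x := by linarith
    have hx0 : 0 ≤ x - 1 := by linarith
    have hL : 0 < L := hμ.trans hμL
    have hηε : ε / (κm * μ) ≤ 1 / 8 := by
      rw [div_le_div_iff₀ hκmμ (by positivity)]
      have : (2 : ℝ) ≤ T := by exact_mod_cast hT1
      nlinarith
    have hlog : 2 * κp * Real.log (2 * x) ≤ (T : ℝ) - 1 := by
      rw [mul_div_assoc] at hT
      linarith
    have hpow := sub_one_mul_pow_le_quarter (n := T - 1) hx1 hκp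
      (by rwa [Nat.cast_sub hT1.le, Nat.cast_one])
    have hκpε : (x - 1) * (κp * ε / L) ≤ 1 / 4 := by
      have hlog2 : 1 / 2 ≤ Real.log (2 * x) := by
        linarith [Real.log_two_gt_d9, Real.log_le_log two_pos (by linarith : 2 ≤ 2 * x)]
      have hκpT : κp ≤ T := by nlinarith
      calc (x - 1) * (κp * ε / L) ≤ x * (κp * ε / L) := by gcongr; linarith
        _ = κp * ε / (κm * μ) := by simp only [x]; field_simp
        _ ≤ 1 / 4 := by rw [div_le_div_iff₀ hκmμ (by norm_num)]; nlinarith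
    have h4κm : 1 / (4 * κm) ≤ 1 / 4 := by gcongr; linarith
    calc aT ≤ (x - 1) * ((1 - 1 / κp) ^ (T - 1) * B + κp * ε / L * B) + 1 / 8 * B := by
          grw [haT, max_le (hfactor.trans hx.le) le_rfl, hb'B, hηε, hgeo]
      _ ≤ (1 - 1 / (4 * κm)) * B := by nlinarith

theorem clr_one_period_le (hμ : 0 < μ) (hμL : μ < L) (hκp : 1 ≤ κp) (hκm : 1 ≤ κm)
    (hε : 0 ≤ ε) {T : ℕ} (hT1 : 1 < T)
    (hT : (T : ℝ) ≥ 2 * κp * Real.log (2 * L / (κm * μ)) + 1)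
    (hcross : 4 * ε ≤ min 1 (κm / T) * μ) (ha : ∀ t, 0 ≤ a t) (hb : ∀ t, 0 ≤ b t)
    (hwarm : ∀ t < T - 1,
      a (t + 1) ≤ max (1 - 1 / L * max (L / κp) μ) (1 / L * L - 1) * a t + 1 / L * ε * b t ∧
      b (t + 1) ≤ (1 - 1 / L * μ) * b t + 1 / L * ε * a t)
    (hlast :
      a T ≤ max (1 - 1 / (κm * μ) * max (L / κp) μ) (1 / (κm * μ) * L - 1) * a (T - 1)
        + 1 / (κm * μ) * ε * b (T - 1) ∧
      b T ≤ (1 - 1 / (κm * μ) * μ) * b (T - 1) + 1 / (κm * μ) * ε * a (T - 1)) :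
    max (a T) (b T) ≤ (1 - 1 / (4 * κm)) * max (a 0) (b 0) := by
  have hT0 : (0 : ℝ) < T := by positivity
  have hεμ : 4 * ε ≤ μ := hcross.trans (mul_le_of_le_one_left hμ.le (min_le_left _ _))
  have hεT : 4 * ε * T ≤ κm * μ := by
    have := hcross.trans (mul_le_mul_of_nonneg_right (min_le_right _ _) hμ.le)
    rwa [div_mul_eq_mul_div, le_div_iff₀ hT0] at this
  obtain ⟨haB, hbB, hgeo⟩ := clr_warmup_le hμ hμL hκp hε (by linarith) ha hwarm
  refine max_le (clr_last_step_S_le hμ hμL hκp hκm hε hT1 hT hεμ hεT (ha _) haB hbB hgeo hlast.1) ?_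
  refine le_of_last_step_contraction hμ hκm hε hεμ (hb _) hbB haB (hlast.2.trans_eq ?_)
  field_simp

end CyclicalSchedule

/-- **One-period contraction for nonlinear problems** (key claim in the proof of
Theorem 2).  Under the bimodal Hessian condition, with period
`T ≥ 2κ₊·log(2L/(κ₋·μ)) + 1`, cyclical learning rates `η₋ = 1/(κ₋·μ)`, `η₊ = 1/L`, and
cross-smoothness `4ε ≤ min(1, κ₋/T)·μ`, after one full period the projected residuals
contract: `max(‖Π_S(θ_T − θ⋆)‖, ‖Π_{Sᶜ}(θ_T − θ⋆)‖) ≤ (1 − 1/(4κ₋))·B` where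
`B = max(‖Π_S(θ_0 − θ⋆)‖, ‖Π_{Sᶜ}(θ_0 − θ⋆)‖)`. -/
theorem unstable_clr_one_period
    {p : ℕ} (f : EuclideanSpace ℝ (Fin p) → ℝ)
    (S : Submodule ℝ (EuclideanSpace ℝ (Fin p)))
    (L μ κp κm ε : ℝ) (hbim : BimodalHessian f S L μ κp κm ε)
    (θstar : EuclideanSpace ℝ (Fin p)) (hmin : ∀ x, f θstar ≤ f x)
    (T : ℕ) (hT1 : 1 < T) (hT : (T : ℝ) ≥ 2 * κp * Real.log (2 * L / (κm * μ)) + 1)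
    (ηm ηp : ℝ) (hηm : ηm = 1 / (κm * μ)) (hηp : ηp = 1 / L)
    (hcross : 4 * ε ≤ min 1 (κm / T) * μ)
    (η : ℕ → ℝ) (hη : ∀ t, η t = if t % T = T - 1 then ηm else ηp)
    (θ : ℕ → EuclideanSpace ℝ (Fin p))
    (hθ : ∀ t, θ (t + 1) = θ t - η t • gradient f (θ t))
    (B : ℝ) (hB : B = max ‖projE S (θ 0 - θstar)‖ ‖projE Sᗮ (θ 0 - θstar)‖) :
    max ‖projE S (θ T - θstar)‖ ‖projE Sᗮ (θ T - θstar)‖ ≤ (1 - 1 / (4 * κm)) * B := by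
  obtain ⟨hμ, hμL, hκp, hκm, hε, -⟩ := id hbim
  have hθs : gradient f θstar = 0 := gradient_eq_zero_of_forall_le hmin
  have hL : 0 < L := hμ.trans hμL
  have hθη (t : ℕ) (ht : t < T) : θ (t + 1) =
      θ t - (if t = T - 1 then 1 / (κm * μ) else 1 / L) • gradient f (θ t) := by
    rw [hθ, hη, Nat.mod_eq_of_lt ht, hηm, hηp]
  subst hB
  simp only [projE_eq_starProjection]
  refine clr_one_period_le (a := fun t => ‖S.starProjection (θ t - θstar)‖)
    (b := fun t => ‖Sᗮ.starProjection (θ t - θstar)‖) hμ hμL hκp hκm hε hT1 hT hcross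
    (fun _ => norm_nonneg _) (fun _ => norm_nonneg _)
    (fun t ht => hbim.gradient_step_le hθs (by positivity) ?_ ?_)
    (hbim.gradient_step_le hθs (by positivity) ?_ ?_)
  · rw [one_div_mul_eq_div, div_le_one hL]
    exact min_le_left _ _
  · simpa [show t ≠ T - 1 by omega] using hθη t (by omega)
  · rw [one_div_mul_eq_div, div_le_one (by positivity)]
    exact min_le_right _ _
  · simpa [Nat.sub_add_cancel hT1.le] using hθη (T - 1) (by omega)
end
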